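/- Let 1 ≤ a ≤ √3, c = (9/8)(a + 1/a), and for K > c²/9 set α = (1/2)(3 - 3a² + √(9a⁴ - 4ca³ + 4Ka²)), β = (1/2)(3 - 3a² - √(9a⁴ - 4ca³ + 4Ka²)), γ = √(Ka² - ca + 9/4), T(K,a) = ∫_α^γ 4a ds / (√((s-α)(s-β))·√(γ² - s²)). Then T(K,a) tends to 0 as K tends to +∞. -/

import Mathlib

open Real intervalIntegral Filter Topology

noncomputable def alphaSU2 (a c K : ℝ) : ℝ :=
  (1 / 2) * (3 - 3 * a ^ 2 + Real.sqrt (9 * a ^ 4 - 4 * c * a ^ 3 + 4 * K * a ^ 2))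

noncomputable def betaSU2 (a c K : ℝ) : ℝ :=
  (1 / 2) * (3 - 3 * a ^ 2 - Real.sqrt (9 * a ^ 4 - 4 * c * a ^ 3 + 4 * K * a ^ 2))

noncomputable def gammaSU2 (a c K : ℝ) : ℝ :=
  Real.sqrt (K * a ^ 2 - c * a + 9 / 4)

/-- The period of the closed Lie–Poisson orbit on `SU(2)`. -/
noncomputable def periodSU2 (a c K : ℝ) : ℝ :=
  ∫ s in (alphaSU2 a c K)..(gammaSU2 a c K),
    4 * a / (Real.sqrt ((s - alphaSU2 a c K) * (s - betaSU2 a c K)) *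
      Real.sqrt ((gammaSU2 a c K) ^ 2 - s ^ 2))

/-!
With `Δ = 9a⁴ - 4ca³ + 4Ka²`, on `[α, γ]` one has `s - β ≥ α - β = √Δ` and
`γ² - s² ≥ γ (γ - s)`, so the integrand is at most `4a / √(√Δ γ)` times the arcsine density `1 / √((s - α)(γ - s))`, whose integral over `[α, γ]`
is bounded by an absolute constant (split `1/√(xy) ≤ √2/√(x+y) (1/√x + 1/√y)`). Since `√Δ` and
`γ` grow like `√K`, `T(K, a) = O(K^(-1/2))`. For `a ≥ 1` and this value of `c`, `0 ≤ α ≤ γ`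
once `K` is large.
-/

open MeasureTheory Set

theorem intervalIntegral.integral_le_of_nonneg_of_le_on_Ioo {μ : Measure ℝ} [NullSingletonClass μ]
    {f g : ℝ → ℝ} {a b : ℝ} (hab : a ≤ b) (hg : IntervalIntegrable g μ a b)
    (hf : ∀ x ∈ Ioo a b, 0 ≤ f x) (hfg : ∀ x ∈ Ioo a b, f x ≤ g x) :
    ∫ x in a..b, f x ∂μ ≤ ∫ x in a..b, g x ∂μ := by
  simp only [intervalIntegral.integral_of_le hab, integral_Ioc_eq_integral_Ioo]
  exact integral_mono_of_nonneg (ae_restrict_of_forall_mem measurableSet_Ioo hf)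
    (hg.1.mono_set Ioo_subset_Ioc_self) (ae_restrict_of_forall_mem measurableSet_Ioo hfg)

namespace Real

-- For `x < 0` both sides are junk values equal to `0`.
theorem one_div_sqrt_eq_rpow_neg_half (x : ℝ) : 1 / √x = x ^ (-(1 / 2) : ℝ) := by
  rcases lt_or_ge x 0 with hx | hx
  · rw [sqrt_eq_zero_of_nonpos hx.le, rpow_def_of_neg hx,
      show (-(1 / 2) : ℝ) * π = -(π / 2) by ring, cos_neg, cos_pi_div_two, mul_zero, div_zero]
  · rw [sqrt_eq_rpow, rpow_neg hx, one_div]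

theorem intervalIntegrable_one_div_sqrt_sub (a b : ℝ) :
    IntervalIntegrable (fun s => 1 / √(s - a)) volume a b := by
  simp only [one_div_sqrt_eq_rpow_neg_half]
  simpa using
    (intervalIntegral.intervalIntegrable_rpow' (by norm_num : (-1 : ℝ) < -(1 / 2))
      (a := 0) (b := b - a)).comp_sub_right a

theorem intervalIntegrable_one_div_sqrt_sub_left (a b : ℝ) :
    IntervalIntegrable (fun s => 1 / √(b - s)) volume a b := by
  simp only [one_div_sqrt_eq_rpow_neg_half]
  simpa using
    ((intervalIntegral.intervalIntegrable_rpow' (by norm_num : (-1 : ℝ) < -(1 / 2))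
      (a := 0) (b := b - a)).comp_sub_left b).symm

theorem integral_one_div_sqrt_sub (a b : ℝ) : ∫ s in a..b, 1 / √(s - a) = 2 * √(b - a) := by
  simp only [one_div_sqrt_eq_rpow_neg_half]
  rw [intervalIntegral.integral_comp_sub_right (fun x => x ^ (-(1 / 2) : ℝ)), sub_self,
    integral_rpow (Or.inl (by norm_num)), sqrt_eq_rpow, zero_rpow (by norm_num)]
  norm_num
  ring

theorem integral_one_div_sqrt_sub_left (a b : ℝ) : ∫ s in a..b, 1 / √(b - s) = 2 * √(b - a) := by
  simp only [one_div_sqrt_eq_rpow_neg_half]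
  rw [intervalIntegral.integral_comp_sub_left (fun x => x ^ (-(1 / 2) : ℝ)), sub_self,
    integral_rpow (Or.inl (by norm_num)), sqrt_eq_rpow, zero_rpow (by norm_num)]
  norm_num
  ring

theorem one_div_sqrt_mul_le {x y : ℝ} (hx : 0 < x) (hy : 0 < y) :
    1 / √(x * y) ≤ √2 / √(x + y) * (1 / √x + 1 / √y) := by
  wlog hxy : x ≤ y generalizing x y
  · simpa [mul_comm, add_comm] using this hy hx (le_of_not_ge hxy)
  have hy' : 1 / √y ≤ √2 / √(x + y) := by
    rw [div_le_div_iff₀ (sqrt_pos.2 hy) (sqrt_pos.2 (by linarith)), one_mul, ← sqrt_mul zero_le_two]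
    exact sqrt_le_sqrt (by linarith)
  calc 1 / √(x * y) = 1 / √x * (1 / √y) := by rw [sqrt_mul hx.le]; ring
    _ ≤ 1 / √x * (√2 / √(x + y)) := by gcongr
    _ ≤ √2 / √(x + y) * (1 / √x + 1 / √y) := by
      rw [mul_comm]; gcongr; linarith [one_div_nonneg.2 (sqrt_nonneg y)]

end Real

section PeriodIntegral

variable {A B G k s : ℝ}

theorem period_integrand_le (hBA : B < A) (hA : 0 ≤ A) (hk : 0 ≤ k) (hs : s ∈ Ioo A G) :
    k / (√((s - A) * (s - B)) * √(G ^ 2 - s ^ 2)) ≤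
      k / √((A - B) * G) * (1 / √((s - A) * (G - s))) := by
  obtain ⟨hAs, hsG⟩ := hs
  have hpos : 0 < (A - B) * G * ((s - A) * (G - s)) := by
    have : 0 < G := by linarith
    have : 0 < s - A := by linarith
    have : 0 < G - s := by linarith
    positivity
  have hle : (A - B) * G * ((s - A) * (G - s)) ≤ (s - A) * (s - B) * (G ^ 2 - s ^ 2) := by
    have hfac : (A - B) * G ≤ (s - B) * (G + s) :=
      mul_le_mul (by linarith) (by linarith) (by linarith) (by linarith)
    have hnn : 0 ≤ (s - A) * (G - s) := mul_nonneg (by linarith) (by linarith)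
    calc (A - B) * G * ((s - A) * (G - s)) ≤ (s - B) * (G + s) * ((s - A) * (G - s)) := by gcongr
      _ = (s - A) * (s - B) * (G ^ 2 - s ^ 2) := by ring
  calc k / (√((s - A) * (s - B)) * √(G ^ 2 - s ^ 2))
      = k / √((s - A) * (s - B) * (G ^ 2 - s ^ 2)) := by
        rw [sqrt_mul (mul_nonneg (by linarith) (by linarith))]
    _ ≤ k / √((A - B) * G * ((s - A) * (G - s))) := by gcongr
    _ = k / √((A - B) * G) * (1 / √((s - A) * (G - s))) := by
        rw [sqrt_mul (by nlinarith)]; ring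

theorem integral_period_le (hBA : B < A) (hA : 0 ≤ A) (hAG : A ≤ G) (hk : 0 ≤ k) :
    ∫ s in A..G, k / (√((s - A) * (s - B)) * √(G ^ 2 - s ^ 2)) ≤
      4 * √2 * k / √((A - B) * G) := by
  rcases hAG.eq_or_lt with rfl | hAG
  · rw [intervalIntegral.integral_same]; positivity
  set C := k / √((A - B) * G) * (√2 / √(G - A))
  have hC : 0 ≤ C := by positivity
  have hg : IntervalIntegrable (fun s => C * (1 / √(s - A) + 1 / √(G - s))) volume A G :=
    ((intervalIntegrable_one_div_sqrt_sub A G).add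
      (intervalIntegrable_one_div_sqrt_sub_left A G)).const_mul C
  calc ∫ s in A..G, k / (√((s - A) * (s - B)) * √(G ^ 2 - s ^ 2))
      ≤ ∫ s in A..G, C * (1 / √(s - A) + 1 / √(G - s)) := by
        refine intervalIntegral.integral_le_of_nonneg_of_le_on_Ioo hAG.le hg
          (fun s _ => by positivity) fun s hs => ?_
        refine (period_integrand_le hBA hA hk hs).trans ?_
        have hsum : G - A = (s - A) + (G - s) := by ring
        rw [mul_assoc, hsum]
        gcongr
        exact one_div_sqrt_mul_le (sub_pos.2 hs.1) (sub_pos.2 hs.2)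
    _ = C * (4 * √(G - A)) := by
        rw [intervalIntegral.integral_const_mul, intervalIntegral.integral_add
          (intervalIntegrable_one_div_sqrt_sub A G) (intervalIntegrable_one_div_sqrt_sub_left A G),
          integral_one_div_sqrt_sub, integral_one_div_sqrt_sub_left]
        ring
    _ = 4 * √2 * k / √((A - B) * G) := by
        have : √(G - A) ≠ 0 := (sqrt_pos.2 (sub_pos.2 hAG)).ne'
        simp only [C]
        field_simp

end PeriodIntegral

section SU2

variable {a c K : ℝ}

theorem alphaSU2_sub_betaSU2 :
    alphaSU2 a c K - betaSU2 a c K = √(9 * a ^ 4 - 4 * c * a ^ 3 + 4 * K * a ^ 2) := by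
  unfold alphaSU2 betaSU2
  ring

theorem alphaSU2_nonneg (h : 3 * (a ^ 2 + 1) ≤ √(9 * a ^ 4 - 4 * c * a ^ 3 + 4 * K * a ^ 2)) :
    0 ≤ alphaSU2 a c K := by
  unfold alphaSU2
  linarith

/- With `c = 9/8 (a + 1/a)` one has `c (a³ - a) = 9/8 (a⁴ - 1)`, whence
`4 γ² - (2 α)² = (a² - 1) (6 √Δ - (27 a² - 9) / 2)`. -/
theorem alphaSU2_le_gammaSU2 (ha : 1 ≤ a) (hc : c = 9 / 8 * (a + 1 / a))
    (h : 3 * (a ^ 2 + 1) ≤ √(9 * a ^ 4 - 4 * c * a ^ 3 + 4 * K * a ^ 2)) :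
    alphaSU2 a c K ≤ gammaSU2 a c K := by
  set r := √(9 * a ^ 4 - 4 * c * a ^ 3 + 4 * K * a ^ 2) with hr
  have hr2 : r ^ 2 = 9 * a ^ 4 - 4 * c * a ^ 3 + 4 * K * a ^ 2 :=
    sq_sqrt (sqrt_pos.1 (by nlinarith : 0 < r)).le
  have hca : c * (a ^ 3 - a) = 9 / 8 * (a ^ 4 - 1) := by
    rw [hc]; field_simp; ring
  have hu : 0 ≤ a ^ 2 - 1 := by nlinarith
  have hsq : (alphaSU2 a c K) ^ 2 ≤ K * a ^ 2 - c * a + 9 / 4 := by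
    unfold alphaSU2
    rw [← hr]
    nlinarith [mul_nonneg hu (by linarith : 0 ≤ 6 * r - (27 * a ^ 2 - 9) / 2)]
  exact le_sqrt_of_sq_le hsq

theorem tendsto_sqrt_discSU2_atTop (ha : a ≠ 0) :
    Tendsto (fun K => √(9 * a ^ 4 - 4 * c * a ^ 3 + 4 * K * a ^ 2)) atTop atTop :=
  tendsto_sqrt_atTop.comp <| tendsto_atTop_add_const_left _ _ <|
    (tendsto_id.const_mul_atTop four_pos).atTop_mul_const (by positivity)

theorem tendsto_gammaSU2_atTop (ha : a ≠ 0) : Tendsto (gammaSU2 a c) atTop atTop := by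
  refine tendsto_sqrt_atTop.comp ?_
  simp only [sub_eq_add_neg, add_assoc]
  exact tendsto_atTop_add_const_right _ _ (tendsto_id.atTop_mul_const (by positivity))

end SU2

theorem stmt_15_general (a : ℝ) (ha1 : 1 ≤ a)
    (c : ℝ) (hc : c = 9 / 8 * (a + 1 / a)) :
    Tendsto (fun K => periodSU2 a c K) atTop (𝓝 0) := by
  have ha0 : 0 < a := by linarith
  have hΔ := tendsto_sqrt_discSU2_atTop (c := c) ha0.ne'
  have hγ := tendsto_gammaSU2_atTop (c := c) ha0.ne'
  have hbound : ∀ᶠ K in atTop, 0 ≤ periodSU2 a c K ∧ periodSU2 a c K ≤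
      4 * √2 * (4 * a) / √(√(9 * a ^ 4 - 4 * c * a ^ 3 + 4 * K * a ^ 2) * gammaSU2 a c K) := by
    filter_upwards [hΔ.eventually_ge_atTop (3 * (a ^ 2 + 1))] with K hK
    have hαγ := alphaSU2_le_gammaSU2 ha1 hc hK
    have hβα : betaSU2 a c K < alphaSU2 a c K := by
      rw [← sub_pos, alphaSU2_sub_betaSU2]; linarith [sq_nonneg a]
    refine ⟨intervalIntegral.integral_nonneg hαγ fun s _ => div_nonneg (by linarith) (by positivity),
      ?_⟩
    rw [← alphaSU2_sub_betaSU2]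
    exact integral_period_le hβα (alphaSU2_nonneg hK) hαγ (by linarith)
  refine squeeze_zero' (hbound.mono fun K h => h.1) (hbound.mono fun K h => h.2) ?_
  exact tendsto_const_nhds.div_atTop (tendsto_sqrt_atTop.comp (hΔ.atTop_mul_atTop₀ hγ))

/-- The period `T(K,a)` tends to `0` as `K → ∞`. -/
theorem stmt_15 (a : ℝ) (ha1 : 1 ≤ a) (ha2 : a ≤ Real.sqrt 3)
    (c : ℝ) (hc : c = 9 / 8 * (a + 1 / a)) :
    Tendsto (fun K => periodSU2 a c K) atTop (𝓝 0) :=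
  stmt_15_general a ha1 c hc
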